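/- arXiv:1212.3498 — 3 statements merged into one kernel-verified Lean document; each statement's English description precedes it below -/
import Mathlib

section
/- Suppose a is a positive integer such that φ(b) = φ(a) has no solution b ≠ a (a counterexample to Carmichael's conjecture). If d·∏_{p|d} p divides a and p = 1 + d is prime, then p² divides a. -/
open Nat

/-!
If `p = d + 1` is prime, `p ∤ n` and every prime factor of `d` divides `n`, then
`φ(p n) = d φ(n) = φ(d n)`, so a value attained only once by `φ` is neither `p n` nor `d n`.
Now `d · rad d ∣ a` provides such an `n` both when `p ∤ a` (take `a = d n`) and when `p ∥ a`
(take `a = p n`, where `d ∣ n` since `p` is coprime to `d`).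
-/

theorem Nat.totient_mul_of_primeFactors_subset {m n : ℕ} (h : m.primeFactors ⊆ n.primeFactors) :
    φ (m * n) = m * φ n := by
  rcases eq_or_ne m 0 with rfl | hm
  · simp
  rcases eq_or_ne n 0 with rfl | hn
  · simp
  have hpf : (m * n).primeFactors = n.primeFactors := by
    rw [Nat.primeFactors_mul hm hn, Finset.union_eq_right.mpr h]
  have hrad : 0 < ∏ p ∈ n.primeFactors, p :=
    Finset.prod_pos fun p hp => Nat.pos_of_mem_primeFactors hp
  apply Nat.eq_of_mul_eq_mul_right hrad
  rw [← hpf, Nat.totient_mul_prod_primeFactors, hpf, mul_assoc m (φ n),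
    Nat.totient_mul_prod_primeFactors, mul_assoc]

theorem Nat.totient_succ_mul_eq_totient_mul {d n : ℕ} (hp : (d + 1).Prime) (hpn : ¬(d + 1) ∣ n)
    (h : d.primeFactors ⊆ n.primeFactors) : φ ((d + 1) * n) = φ (d * n) := by
  rw [Nat.totient_mul_of_prime_of_not_dvd hp hpn, Nat.totient_mul_of_primeFactors_subset h,
    Nat.add_sub_cancel]

theorem Nat.ne_succ_mul_of_totient_unique {a d n : ℕ}
    (hcar : ∀ b : ℕ, 0 < b → φ b = φ a → b = a) (hp : (d + 1).Prime) (hn : n ≠ 0)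
    (hpn : ¬(d + 1) ∣ n) (h : d.primeFactors ⊆ n.primeFactors) :
    a ≠ (d + 1) * n ∧ a ≠ d * n := by
  have htot := Nat.totient_succ_mul_eq_totient_mul hp hpn h
  have hd : d ≠ 0 := by rintro rfl; exact Nat.not_prime_one hp
  have hne : (d + 1) * n ≠ d * n := by
    intro heq
    exact Nat.succ_ne_self d (Nat.eq_of_mul_eq_mul_right (Nat.pos_of_ne_zero hn) heq)
  constructor
  · rintro rfl
    exact hne (hcar _ (by positivity) htot.symm).symm
  · rintro rfl
    exact hne (hcar _ (by positivity) htot)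

theorem stmt_4_general (a : ℕ)
    (hcar : ∀ b : ℕ, 0 < b → Nat.totient b = Nat.totient a → b = a)
    (d : ℕ)
    (hdiv : (d * ∏ p ∈ d.primeFactors, p) ∣ a)
    (hp : Nat.Prime (1 + d)) : (1 + d) ^ 2 ∣ a := by
  rw [add_comm] at hp ⊢
  by_contra hsq
  have ha0 : a ≠ 0 := by rintro rfl; exact hsq (dvd_zero _)
  have hpd : Coprime (d + 1) d := Nat.coprime_self_add_left.mpr (Nat.coprime_one_left d)
  by_cases hpa : d + 1 ∣ a
  · obtain ⟨n, rfl⟩ := hpa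
    have hn : n ≠ 0 := right_ne_zero_of_mul ha0
    have hpn : ¬(d + 1) ∣ n := fun h => hsq (by rw [sq]; exact mul_dvd_mul_left _ h)
    have hdn : d ∣ n := hpd.symm.dvd_of_dvd_mul_left ((dvd_mul_right d _).trans hdiv)
    exact (Nat.ne_succ_mul_of_totient_unique hcar hp hn hpn (Nat.primeFactors_mono hdn hn)).1 rfl
  · obtain ⟨n, rfl⟩ := (dvd_mul_right d _).trans hdiv
    have hn : n ≠ 0 := right_ne_zero_of_mul ha0
    have hpn : ¬(d + 1) ∣ n := fun h => hpa (h.mul_left d)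
    have hrad : ∏ p ∈ d.primeFactors, p ∣ n :=
      (Nat.mul_dvd_mul_iff_left (Nat.pos_of_ne_zero (left_ne_zero_of_mul ha0))).mp hdiv
    exact (Nat.ne_succ_mul_of_totient_unique hcar hp hn hpn
      ((Nat.prod_primeFactors_dvd_iff hn).mp hrad)).2 rfl

theorem stmt_4 (a : ℕ) (ha : 0 < a)
    (hcar : ∀ b : ℕ, 0 < b → Nat.totient b = Nat.totient a → b = a)
    (d : ℕ) (hd : 0 < d)
    (hdiv : (d * ∏ p ∈ d.primeFactors, p) ∣ a)
    (hp : Nat.Prime (1 + d)) : (1 + d) ^ 2 ∣ a :=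
  stmt_4_general a hcar d hdiv hp
end

section
/- Let A be a set of primes and T the set of positive integers all of whose prime factors lie in A. Then for s with 0 < s ≤ 1, ∑_{m ∈ T} m^{-s} = ∏_{p ∈ A} (1 − p^{-s})^{-1} ≤ exp(λ(s) · ∑_{p∈A} (p−1)^{-s}), where λ(s) = 1/(2^s−1), whenever the sum ∑_{p∈A}(p−1)^{-s} is finite. -/
/-!
Each Euler factor satisfies
`(1 - p^{-s})⁻¹ = 1 + 1/(p^s - 1) ≤ 1 + λ(s) (p-1)^{-s} ≤ exp (λ(s) (p-1)^{-s})`,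
where the middle step is `(2^s - 1) x^s ≤ (x + 1)^s - 1` for `x ≥ 1`, i.e. `u ↦ (1 + u)^s - u^s` is
antitone for `s ≤ 1`. So every finite Euler product over `A` is at most `exp (λ(s) V)`. Every finite
set of `A`-factored numbers is factored over a finite subset of `A`, hence the nonnegative series
`∑_{m ∈ T} m^{-s}` has partial sums bounded by such products; it therefore converges, and the Euler
product for the completely multiplicative function `n ↦ n^{-s} 1_T(n)` identifies its sum.
-/

open Finset Real

namespace Nat

/-- The set `T` of the statement: the analogue of `Nat.factoredNumbers` for an arbitrary set `A`. -/
def factoredNumbersIn (A : Set ℕ) : Set ℕ := {n | 0 < n ∧ ∀ p : ℕ, p.Prime → p ∣ n → p ∈ A}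

variable {A : Set ℕ} {m n p : ℕ}

lemma mem_factoredNumbersIn_iff_primeFactors_subset :
    n ∈ factoredNumbersIn A ↔ n ≠ 0 ∧ ↑n.primeFactors ⊆ A := by
  simp only [factoredNumbersIn, Set.mem_ofPred_eq, Set.subset_def, mem_coe, mem_primeFactors,
    Nat.pos_iff_ne_zero]
  grind

lemma mul_mem_factoredNumbersIn_iff :
    m * n ∈ factoredNumbersIn A ↔ m ∈ factoredNumbersIn A ∧ n ∈ factoredNumbersIn A := by
  simp only [mem_factoredNumbersIn_iff_primeFactors_subset, mul_ne_zero_iff]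
  constructor
  · rintro ⟨⟨hm, hn⟩, h⟩
    rw [primeFactors_mul hm hn, coe_union, Set.union_subset_iff] at h
    exact ⟨⟨hm, h.1⟩, ⟨hn, h.2⟩⟩
  · rintro ⟨⟨hm, hmA⟩, ⟨hn, hnA⟩⟩
    rw [primeFactors_mul hm hn, coe_union]
    exact ⟨⟨hm, hn⟩, Set.union_subset hmA hnA⟩

lemma Prime.mem_factoredNumbersIn_iff (hp : p.Prime) : p ∈ factoredNumbersIn A ↔ p ∈ A := by
  simp [mem_factoredNumbersIn_iff_primeFactors_subset, hp.ne_zero, hp.primeFactors]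

end Nat

open Nat

namespace MonoidWithZeroHom

variable {R : Type*} [MonoidWithZero R]

noncomputable def restrictFactored (A : Set ℕ) (f : ℕ →*₀ R) : ℕ →*₀ R where
  toFun := (factoredNumbersIn A).indicator f
  map_zero' := Set.indicator_of_notMem (by simp [factoredNumbersIn]) _
  map_one' := by
    rw [Set.indicator_of_mem (by simp [mem_factoredNumbersIn_iff_primeFactors_subset]), map_one]
  map_mul' m n := by
    by_cases hmn : m * n ∈ factoredNumbersIn A
    · obtain ⟨hm, hn⟩ := mul_mem_factoredNumbersIn_iff.mp hmn
      simp only [Set.indicator_of_mem hmn, Set.indicator_of_mem hm, Set.indicator_of_mem hn,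
        map_mul]
    · rw [Set.indicator_of_notMem hmn]
      rcases not_and_or.mp (mul_mem_factoredNumbersIn_iff.not.mp hmn) with hm | hn
      · rw [Set.indicator_of_notMem hm, zero_mul]
      · rw [Set.indicator_of_notMem hn, mul_zero]

variable {A : Set ℕ}

lemma restrictFactored_apply (f : ℕ →*₀ R) (n : ℕ) :
    f.restrictFactored A n = (factoredNumbersIn A).indicator f n := rfl

end MonoidWithZeroHom

section EulerProduct

variable {A : Set ℕ}

lemma tprod_inv_one_sub_eq_tsum_restrictFactored {F : Type*} [NormedField F] [CompleteSpace F]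
    (hA : ∀ p ∈ A, p.Prime) (f : ℕ →*₀ F) (hsum : Summable fun n ↦ ‖f.restrictFactored A n‖) :
    ∏' p : A, (1 - f p)⁻¹ = ∑' n, f.restrictFactored A n := by
  rw [← EulerProduct.eulerProduct_completely_multiplicative_tprod hsum]
  let i : A → Primes := fun p ↦ ⟨p, hA p p.2⟩
  have hi : Function.Injective i := fun p q h ↦ Subtype.ext (congrArg (fun p : Primes ↦ (p : ℕ)) h)
  refine Eq.trans ?_ (hi.tprod_eq (f := fun p : Primes ↦ (1 - f.restrictFactored A p)⁻¹) ?_)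
  · refine tprod_congr fun p ↦ ?_
    rw [MonoidWithZeroHom.restrictFactored_apply,
      Set.indicator_of_mem ((hA p p.2).mem_factoredNumbersIn_iff.mpr p.2)]
  · intro p hp
    by_contra hpA
    refine hp ?_
    change (1 - f.restrictFactored A p)⁻¹ = 1
    rw [MonoidWithZeroHom.restrictFactored_apply, Set.indicator_of_notMem, sub_zero, inv_one]
    exact fun h ↦ hpA ⟨⟨p, p.2.mem_factoredNumbersIn_iff.mp h⟩, rfl⟩

lemma sum_restrictFactored_le_of_prod_le (f : ℕ →*₀ ℝ) (hf0 : ∀ n, 0 ≤ f n)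
    (hf1 : ∀ p, p.Prime → f p < 1) {C : ℝ} (hC : ∀ G : Finset A, ∏ p ∈ G, (1 - f p)⁻¹ ≤ C)
    (S : Finset ℕ) : ∑ n ∈ S, f.restrictFactored A n ≤ C := by
  classical
  set G := (S.biUnion primeFactors).filter (· ∈ A)
  obtain ⟨hsum, hprod⟩ := EulerProduct.summable_and_hasSum_factoredNumbers_prod_filter_prime_geometric
    (f := (f : ℕ →* ℝ)) (fun hp ↦ (Real.norm_of_nonneg (hf0 _)).trans_lt (hf1 _ hp)) G
  have hind0 : 0 ≤ (factoredNumbers G).indicator f := Set.indicator_nonneg fun n _ ↦ hf0 n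
  have hle : ∀ n ∈ S, f.restrictFactored A n ≤ (factoredNumbers G).indicator f n := by
    intro n hn
    rw [MonoidWithZeroHom.restrictFactored_apply]
    by_cases hnA : n ∈ factoredNumbersIn A
    · obtain ⟨hn0, hnA'⟩ := mem_factoredNumbersIn_iff_primeFactors_subset.mp hnA
      have hnG : n ∈ factoredNumbers G := mem_factoredNumbers_of_primeFactors_subset hn0
        fun p hp ↦ mem_filter.mpr ⟨mem_biUnion.mpr ⟨n, hn, hp⟩, hnA' hp⟩
      rw [Set.indicator_of_mem hnA, Set.indicator_of_mem hnG]
    · rw [Set.indicator_of_notMem hnA]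
      exact hind0 n
  have hGprime : ∀ p ∈ G, p.Prime := fun p hp ↦ by
    obtain ⟨n, -, hpn⟩ := mem_biUnion.mp (mem_filter.mp hp).1
    exact prime_of_mem_primeFactors hpn
  calc ∑ n ∈ S, f.restrictFactored A n ≤ ∑ n ∈ S, (factoredNumbers G).indicator f n :=
        sum_le_sum hle
    _ ≤ ∑' n, (factoredNumbers G).indicator f n :=
        (summable_subtype_iff_indicator.mp hsum.of_norm).sum_le_tsum S fun n _ ↦ hind0 n
    _ = ∏ p ∈ G with p.Prime, (1 - f p)⁻¹ := by rw [← _root_.tsum_subtype]; exact hprod.tsum_eq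
    _ = ∏ p ∈ (S.biUnion primeFactors).subtype (· ∈ A), (1 - f p)⁻¹ := by
        rw [filter_true_of_mem hGprime, show G = _ from (subtype_map _).symm, prod_map]
        rfl
    _ ≤ C := hC _

end EulerProduct

lemma antitoneOn_one_add_rpow_sub_rpow {s : ℝ} (hs0 : 0 ≤ s) (hs1 : s ≤ 1) :
    AntitoneOn (fun u : ℝ ↦ (1 + u) ^ s - u ^ s) (Set.Ioi 0) := by
  have hderiv : ∀ u ∈ Set.Ioi (0 : ℝ),
      HasDerivAt (fun u : ℝ ↦ (1 + u) ^ s - u ^ s) (s * (1 + u) ^ (s - 1) - s * u ^ (s - 1)) u := by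
    intro u (hu : 0 < u)
    have h1 := (hasDerivAt_rpow_const (p := s) (Or.inl (by positivity : 1 + u ≠ 0))).comp u
      ((hasDerivAt_id u).const_add 1)
    rw [mul_one] at h1
    exact h1.sub (hasDerivAt_rpow_const (Or.inl hu.ne'))
  refine antitoneOn_of_deriv_nonpos (convex_Ioi 0)
    (fun u hu ↦ (hderiv u hu).continuousAt.continuousWithinAt) ?_ ?_ <;> rw [interior_Ioi]
  · exact fun u hu ↦ (hderiv u hu).differentiableAt.differentiableWithinAt
  · intro u (hu : 0 < u)
    rw [(hderiv u hu).deriv, ← mul_sub]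
    exact mul_nonpos_of_nonneg_of_nonpos hs0 <|
      sub_nonpos.mpr <| rpow_le_rpow_of_nonpos hu (by linarith) (by linarith)

lemma two_rpow_sub_one_mul_rpow_le {s x : ℝ} (hs0 : 0 ≤ s) (hs1 : s ≤ 1) (hx : 1 ≤ x) :
    (2 ^ s - 1) * x ^ s ≤ (x + 1) ^ s - 1 := by
  have hx0 : 0 < x := by linarith
  have key := antitoneOn_one_add_rpow_sub_rpow hs0 hs1 (inv_pos.mpr hx0) (zero_lt_one' ℝ)
    (inv_le_one_of_one_le₀ hx)
  have hscale : x ^ s * ((1 + x⁻¹) ^ s - x⁻¹ ^ s) = (x + 1) ^ s - 1 := by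
    rw [mul_sub, ← mul_rpow hx0.le (by positivity), ← mul_rpow hx0.le (by positivity),
      mul_inv_cancel₀ hx0.ne', mul_one_add, mul_inv_cancel₀ hx0.ne', one_rpow]
  rw [← hscale, mul_comm]
  refine mul_le_mul_of_nonneg_left ?_ (by positivity)
  simpa only [one_add_one_eq_two, one_rpow] using key

lemma inv_one_sub_rpow_neg_le_exp {s q : ℝ} (hs0 : 0 < s) (hs1 : s ≤ 1) (hq : 2 ≤ q) :
    (1 - q ^ (-s))⁻¹ ≤ exp (1 / (2 ^ s - 1) * (q - 1) ^ (-s)) := by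
  have h2s : 0 < (2 : ℝ) ^ s - 1 := sub_pos.mpr (one_lt_rpow one_lt_two hs0)
  have hqs : 0 < q ^ s - 1 := sub_pos.mpr (one_lt_rpow (by linarith) hs0)
  have hkey := two_rpow_sub_one_mul_rpow_le hs0.le hs1 (by linarith : 1 ≤ q - 1)
  rw [sub_add_cancel] at hkey
  calc (1 - q ^ (-s))⁻¹ = 1 + 1 / (q ^ s - 1) := by
        rw [rpow_neg (by linarith)]
        field_simp
        ring
    _ ≤ 1 + 1 / ((2 ^ s - 1) * (q - 1) ^ s) := by
        gcongr
        exact mul_pos h2s (rpow_pos_of_pos (by linarith) s)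
    _ = 1 + 1 / (2 ^ s - 1) * (q - 1) ^ (-s) := by
        rw [rpow_neg (by linarith), one_div_mul_eq_div, div_mul_eq_div_div, one_div]; ring
    _ ≤ exp (1 / (2 ^ s - 1) * (q - 1) ^ (-s)) := by
        rw [add_comm]; exact add_one_le_exp _

noncomputable def natCastRpowHom (s : ℝ) (hs : s ≠ 0) : ℕ →*₀ ℝ where
  toFun n := (n : ℝ) ^ s
  map_zero' := by simp [zero_rpow hs]
  map_one' := by simp
  map_mul' m n := by
    push_cast
    exact mul_rpow m.cast_nonneg n.cast_nonneg

lemma prod_inv_one_sub_rpow_neg_le_exp {A : Set ℕ} (hA : ∀ p ∈ A, 2 ≤ p) {s : ℝ} (hs0 : 0 < s)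
    (hs1 : s ≤ 1) (hV : Summable fun p : A ↦ (((p : ℕ) : ℝ) - 1) ^ (-s)) (G : Finset A) :
    ∏ p ∈ G, (1 - ((p : ℕ) : ℝ) ^ (-s))⁻¹ ≤
      exp (1 / (2 ^ s - 1) * ∑' p : A, (((p : ℕ) : ℝ) - 1) ^ (-s)) := by
  have h2 (p : A) : (2 : ℝ) ≤ (p : ℕ) := by exact_mod_cast hA p p.2
  calc ∏ p ∈ G, (1 - ((p : ℕ) : ℝ) ^ (-s))⁻¹
      ≤ ∏ p ∈ G, exp (1 / (2 ^ s - 1) * (((p : ℕ) : ℝ) - 1) ^ (-s)) := by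
        refine prod_le_prod (fun p _ ↦ inv_nonneg.mpr (sub_nonneg.mpr ?_))
          fun p _ ↦ inv_one_sub_rpow_neg_le_exp hs0 hs1 (h2 p)
        exact rpow_le_one_of_one_le_of_nonpos (by linarith [h2 p]) (by linarith)
    _ = exp (1 / (2 ^ s - 1) * ∑ p ∈ G, (((p : ℕ) : ℝ) - 1) ^ (-s)) := by
        rw [← exp_sum, mul_sum]
    _ ≤ exp (1 / (2 ^ s - 1) * ∑' p : A, (((p : ℕ) : ℝ) - 1) ^ (-s)) := by
        have hlam : 0 ≤ 1 / ((2 : ℝ) ^ s - 1) :=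
          one_div_nonneg.mpr (sub_nonneg.mpr (one_le_rpow one_le_two hs0.le))
        gcongr
        exact hV.sum_le_tsum G fun p _ ↦ rpow_nonneg (by linarith [h2 p]) _

theorem stmt_6 (A : Set ℕ) (hA : ∀ p ∈ A, Nat.Prime p)
    (s : ℝ) (hs0 : 0 < s) (hs1 : s ≤ 1)
    (hV : Summable fun p : A => (((p : ℕ) : ℝ) - 1) ^ (-s)) :
    (∑' m : {n : ℕ // 0 < n ∧ ∀ p : ℕ, Nat.Prime p → p ∣ n → p ∈ A},
        ((m : ℕ) : ℝ) ^ (-s)) = ∏' p : A, (1 - ((p : ℕ) : ℝ) ^ (-s))⁻¹ ∧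
    (∏' p : A, (1 - ((p : ℕ) : ℝ) ^ (-s))⁻¹) ≤
      Real.exp ((1 / ((2 : ℝ) ^ s - 1)) * ∑' p : A, (((p : ℕ) : ℝ) - 1) ^ (-s)) := by
  set f := natCastRpowHom (-s) (neg_ne_zero.mpr hs0.ne')
  have hf0 (n : ℕ) : 0 ≤ f n := rpow_nonneg n.cast_nonneg _
  have hf1 (p : ℕ) (hp : p.Prime) : f p < 1 :=
    rpow_lt_one_of_one_lt_of_neg (by exact_mod_cast hp.one_lt) (by linarith)
  have hg0 : 0 ≤ ⇑(f.restrictFactored A) := fun n ↦ Set.indicator_nonneg (fun n _ ↦ hf0 n) n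
  have hbound := sum_restrictFactored_le_of_prod_le f hf0 hf1
    (prod_inv_one_sub_rpow_neg_le_exp (fun p hp ↦ (hA p hp).two_le) hs0 hs1 hV)
  have heuler := tprod_inv_one_sub_eq_tsum_restrictFactored hA f (summable_of_sum_le hg0 hbound).abs
  rw [show (∑' m : {n : ℕ // 0 < n ∧ ∀ p : ℕ, Nat.Prime p → p ∣ n → p ∈ A}, ((m : ℕ) : ℝ) ^ (-s))
    = ∑' n, f.restrictFactored A n from _root_.tsum_subtype (factoredNumbersIn A) f]
  exact ⟨heuler.symm, heuler ▸ Real.tsum_le_of_sum_le hg0 hbound⟩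
end

section
/- Let f(x) = (x+ε)/3 + 8n·e^{2n(D+1+x)}·(x+ε)², where ε = 1/(100·n·e^{2n(D+2)}), n ≥ 1 an integer, D ≥ 0. Then f(0) > 0, f is convex on [0,∞), and f(ε) < ε; consequently f has a unique fixed point x̃ in (0, ε), and any sequence x₀ = 0, x_{k+1} ≤ f(x_k) with x_k ≥ 0 satisfies x_k ≤ x̃ < ε for all k. -/
/-!
On `[-ε, ∞)` the map `f` is increasing and convex: `x ↦ exp (2n(D + 1 + x))` and `x ↦ (x + ε)²`
are nonnegative, increasing and convex there, hence so is their product. The choice of `ε` gives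
`ε ≤ 1`, so `exp (2n(D + 1 + ε)) ≤ exp (2n(D + 2))` and the quadratic term of `f ε` is at most
`32 n exp (2n(D + 2)) ε² = 0.32 ε`; thus `f ε < ε`, while `f 0 > 0`. The intermediate value theorem
gives a fixed point in `(0, ε)`, unique because `f - id` is convex and negative at `ε`. Finally,
`x k ≤ x̃` implies `x (k + 1) ≤ f (x k) ≤ f x̃ = x̃` by monotonicity.
-/

open Real Set Function

theorem MonotoneOn.seq_le_of_isFixedPt {α : Type*} [Preorder α] {f : α → α} {s : Set α}
    (hf : MonotoneOn f s) {p : α} (hp : p ∈ s) (hfp : IsFixedPt f p) {x : ℕ → α}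
    (hxs : ∀ k, x k ∈ s) (h0 : x 0 ≤ p) (hstep : ∀ k, x (k + 1) ≤ f (x k)) :
    ∀ k, x k ≤ p
  | 0 => h0
  | k + 1 =>
    calc x (k + 1) ≤ f (x k) := hstep k
      _ ≤ f p := hf (hxs k) hp (hf.seq_le_of_isFixedPt hp hfp hxs h0 hstep k)
      _ = p := hfp

theorem ConvexOn.existsUnique_isFixedPt_Ioo {f : ℝ → ℝ} {a b : ℝ} (hab : a ≤ b)
    (hf : ConvexOn ℝ (Icc a b) f) (hfc : ContinuousOn f (Icc a b)) (ha : a < f a)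
    (hb : f b < b) : ∃! x, x ∈ Ioo a b ∧ IsFixedPt f x := by
  have hg : ConvexOn ℝ (Icc a b) (f - id) := hf.sub (concaveOn_id hf.1)
  obtain ⟨x, hx, hgx⟩ := intermediate_value_Ioo' hab (hfc.sub continuousOn_id)
    ⟨sub_neg.2 hb, sub_pos.2 ha⟩
  -- Between a fixed point `p` and `b`, where `f b < b`, convexity forces `f q < q`.
  have h_not_lt : ∀ p ∈ Ioo a b, ∀ q ∈ Ioo a b, IsFixedPt f p → IsFixedPt f q → ¬ p < q := by
    intro p hp q hq hfp hfq hpq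
    have := hg.lt_left_of_right_lt (Ioo_subset_Icc_self hp) (right_mem_Icc.2 hab)
      (Ioo_subset_openSegment ⟨hpq, hq.2⟩) (by simp [hfq.eq, hb])
    simp [hfp.eq, hfq.eq] at this
  have hfx : IsFixedPt f x := sub_eq_zero.1 hgx
  refine ⟨x, ⟨hx, hfx⟩, fun y ⟨hy, hfy⟩ => ?_⟩
  exact le_antisymm (le_of_not_gt (h_not_lt x hx y hy hfx hfy))
    (le_of_not_gt (h_not_lt y hy x hx hfy hfx))

theorem convexOn_exp_mul_add_mul_sq {a b c : ℝ} (hb : 0 ≤ b) :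
    ConvexOn ℝ (Ici (-c)) fun x => exp (b * (a + x)) * (x + c) ^ 2 := by
  have h_exp : ConvexOn ℝ (Ici (-c)) fun x => exp (b * (a + x)) :=
    ((convexOn_exp.comp_linearMap (b • LinearMap.id)).translate_right a).subset
      (subset_univ _) (convex_Ici _)
  have h_sq : ConvexOn ℝ (Ici (-c)) fun x => (x + c) ^ 2 :=
    ((even_two.convexOn_pow).translate_left c).subset (subset_univ _) (convex_Ici _)
  have h_exp_mono : MonotoneOn (fun x => exp (b * (a + x))) (Ici (-c)) :=
    fun x _ y _ hxy => by dsimp only; gcongr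
  have h_sq_mono : MonotoneOn (fun x => (x + c) ^ 2) (Ici (-c)) := fun x hx y _ hxy => by
    have : 0 ≤ x + c := by linarith [mem_Ici.1 hx]
    dsimp only; gcongr
  exact h_exp.mul h_sq (fun x _ => (exp_pos _).le) (fun x _ => sq_nonneg _)
    (h_exp_mono.monovaryOn h_sq_mono)

noncomputable def stepBound (n : ℕ) (D ε x : ℝ) : ℝ :=
  (x + ε) / 3 + 8 * n * exp (2 * n * (D + 1 + x)) * (x + ε) ^ 2

section stepBound

variable (n : ℕ) (D ε : ℝ)

theorem continuous_stepBound : Continuous (stepBound n D ε) := by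
  unfold stepBound; fun_prop

theorem monotoneOn_stepBound : MonotoneOn (stepBound n D ε) (Ici (-ε)) := by
  intro x hx y _ hxy
  have : 0 ≤ x + ε := by linarith [mem_Ici.1 hx]
  unfold stepBound; gcongr

theorem convexOn_stepBound : ConvexOn ℝ (Ici (-ε)) (stepBound n D ε) := by
  have h_lin : ConvexOn ℝ (Ici (-ε)) fun x => (x + ε) / 3 :=
    (((convexOn_id (convex_Ici _)).add_const ε).smul (by norm_num : (0 : ℝ) ≤ 1 / 3)).congr
      fun x _ => by simp only [Pi.add_apply, id, smul_eq_mul]; ring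
  have h_prod := (convexOn_exp_mul_add_mul_sq (a := D + 1) (c := ε)
    (by positivity : (0 : ℝ) ≤ 2 * n)).smul (by positivity : (0 : ℝ) ≤ 8 * n)
  refine (h_lin.add h_prod).congr fun x _ => ?_
  simp only [stepBound, Pi.add_apply, smul_eq_mul]
  ring

variable {n D ε}

theorem stepBound_lt_self (hn : 1 ≤ n) (hD : 0 ≤ D)
    (hε : ε = 1 / (100 * n * exp (2 * n * (D + 2)))) : stepBound n D ε ε < ε := by
  set E := exp (2 * n * (D + 2))
  have hn' : (1 : ℝ) ≤ n := by exact_mod_cast hn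
  have hE : 1 ≤ E := one_le_exp (by positivity)
  have hε0 : 0 < ε := by rw [hε]; positivity
  have hnEε : n * E * ε = 1 / 100 := by rw [hε]; field_simp
  have hnE : 1 ≤ n * E := one_le_mul_of_one_le_of_one_le hn' hE
  have hε1 : ε ≤ 1 := by nlinarith [mul_le_mul_of_nonneg_right hnE hε0.le]
  have h_exp : exp (2 * n * (D + 1 + ε)) ≤ E := exp_le_exp.2 (by nlinarith)
  calc stepBound n D ε ε
      ≤ 2 * ε / 3 + 32 * (n * E * ε) * ε := by
        unfold stepBound
        nlinarith [mul_le_mul_of_nonneg_left h_exp (by positivity : (0 : ℝ) ≤ 32 * n * ε ^ 2)]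
    _ < ε := by rw [hnEε]; linarith

end stepBound

theorem stmt_16 (n : ℕ) (hn : 1 ≤ n) (D : ℝ) (hD : 0 ≤ D)
    (ε : ℝ) (hε : ε = 1 / (100 * n * Real.exp (2 * n * (D + 2))))
    (f : ℝ → ℝ)
    (hf : ∀ x : ℝ, f x = (x + ε) / 3 + 8 * n * Real.exp (2 * n * (D + 1 + x)) * (x + ε) ^ 2) :
    0 < f 0 ∧ ConvexOn ℝ (Set.Ici 0) f ∧ f ε < ε ∧
    ∃ xt ∈ Set.Ioo 0 ε, f xt = xt ∧
      (∀ y ∈ Set.Ioo 0 ε, f y = y → y = xt) ∧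
      ∀ x : ℕ → ℝ, x 0 = 0 → (∀ k, 0 ≤ x k) → (∀ k, x (k + 1) ≤ f (x k)) →
        ∀ k, x k ≤ xt := by
  obtain rfl : f = stepBound n D ε := funext hf
  have hε0 : 0 < ε := by rw [hε]; positivity
  have hIci : Ici (0 : ℝ) ⊆ Ici (-ε) := Ici_subset_Ici.2 (by linarith)
  have h_pos : 0 < stepBound n D ε 0 := by unfold stepBound; positivity
  have h_conv := (convexOn_stepBound n D ε).subset hIci (convex_Ici 0)
  have h_lt := stepBound_lt_self hn hD hε
  obtain ⟨xt, ⟨hxt, h_fix⟩, h_uniq⟩ :=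
    (h_conv.subset Icc_subset_Ici_self (convex_Icc 0 ε)).existsUnique_isFixedPt_Ioo hε0.le
      (continuous_stepBound n D ε).continuousOn h_pos h_lt
  refine ⟨h_pos, h_conv, h_lt, xt, hxt, h_fix, fun y hy hfy => h_uniq y ⟨hy, hfy⟩,
    fun x hx0 hx hstep => ?_⟩
  exact ((monotoneOn_stepBound n D ε).mono hIci).seq_le_of_isFixedPt hxt.1.le h_fix hx
    (hx0.trans_le hxt.1.le) hstep
end
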